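/- The functions F and R are Lipschitz continuous on the level set Ω_θ: there exist constants L_F ≥ 0 and L_R ≥ 0 such that |F(z) − F(z′)| ≤ L_F‖z − z′‖₂ and |R(z) − R(z′)| ≤ L_R‖z − z′‖₂ for all z, z′ ∈ Ω_θ. -/

import Mathlib

open scoped BigOperators

noncomputable section

/-- A point `z = (W, b₁, b₂, V)`. -/
abbrev Pt (N N₀ N₁ : ℕ) : Type :=
  Matrix (Fin N₁) (Fin N₀) ℝ × (Fin N₁ → ℝ) × (Fin N₀ → ℝ) × Matrix (Fin N₁) (Fin N) ℝ

/-- ReLU: positive part. -/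
def relu (y : ℝ) : ℝ := max y 0

variable {N N₀ N₁ : ℕ}

/-- squared Euclidean norm of a point `z = (W,b₁,b₂,V)`. -/
def sqnormPt (z : Pt N N₀ N₁) : ℝ :=
  (∑ i, ∑ j, (z.1 i j) ^ 2) + (∑ i, (z.2.1 i) ^ 2) + (∑ j, (z.2.2.1 j) ^ 2)
    + (∑ i, ∑ n, (z.2.2.2 i n) ^ 2)

/-- Euclidean norm of a point. -/
def normPt (z : Pt N N₀ N₁) : ℝ := Real.sqrt (sqnormPt z)

/-- Euclidean distance between points. -/
def distPt (z z' : Pt N N₀ N₁) : ℝ := normPt (z - z')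

/-- `(W xₙ + b₁)ᵢ`. -/
def preact (X : Matrix (Fin N₀) (Fin N) ℝ) (z : Pt N N₀ N₁) (i : Fin N₁) (n : Fin N) : ℝ :=
  (∑ j, z.1 i j * X j n) + z.2.1 i

/-- `(Wᵀ vₙ + b₂)ⱼ`. -/
def outPre (z : Pt N N₀ N₁) (j : Fin N₀) (n : Fin N) : ℝ :=
  (∑ i, z.1 i j * z.2.2.2 i n) + z.2.2.1 j

/-- fidelity term `F(z)`. -/
def Fv (X : Matrix (Fin N₀) (Fin N) ℝ) (z : Pt N N₀ N₁) : ℝ :=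
  (1 / (N : ℝ)) * ∑ n, ∑ j, (relu (outPre z j n) - X j n) ^ 2

/-- regularization term `R(z)`. -/
def Rv (lam₁ lam₂ : ℝ) (z : Pt N N₀ N₁) : ℝ :=
  lam₁ * (∑ n, ∑ i, z.2.2.2 i n) + lam₂ * ∑ i, ∑ j, (z.1 i j) ^ 2

/-- penalty term `P(z)`. -/
def Pv (β : ℝ) (X : Matrix (Fin N₀) (Fin N) ℝ) (z : Pt N N₀ N₁) : ℝ :=
  β * ∑ n, ∑ i, (z.2.2.2 i n - relu (preact X z i n))

/-- objective `O(z) = F(z) + R(z) + P(z)`. -/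
def Ov (lam₁ lam₂ β : ℝ) (X : Matrix (Fin N₀) (Fin N) ℝ) (z : Pt N N₀ N₁) : ℝ :=
  Fv X z + Rv lam₁ lam₂ z + Pv β X z

/-- `Ω₁ = {z : vₙ = (Wxₙ + b₁)₊}`. -/
def Omega1 (X : Matrix (Fin N₀) (Fin N) ℝ) : Set (Pt N N₀ N₁) :=
  {z | ∀ i n, z.2.2.2 i n = relu (preact X z i n)}

/-- `Ω₂ = {z : vₙ ≥ (Wxₙ + b₁)₊}`. -/
def Omega2 (X : Matrix (Fin N₀) (Fin N) ℝ) : Set (Pt N N₀ N₁) :=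
  {z | ∀ i n, relu (preact X z i n) ≤ z.2.2.2 i n}

/-- level set `Ω_θ = {z ∈ Ω₂ : O(z) ≤ θ}` (also used for `Ω_δ`). -/
def OmegaLev (lam₁ lam₂ β θ : ℝ) (X : Matrix (Fin N₀) (Fin N) ℝ) : Set (Pt N N₀ N₁) :=
  {z | z ∈ Omega2 X ∧ Ov lam₁ lam₂ β X z ≤ θ}

/-- `‖X‖₁`: maximum absolute column sum. -/
def Xcol1 (X : Matrix (Fin N₀) (Fin N) ℝ) : ℝ := ⨆ n, ∑ j, |X j n|

/-- the constant `α`. -/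
def alphaC (N N₀ N₁ : ℕ) (lam₁ lam₂ θ : ℝ) (X : Matrix (Fin N₀) (Fin N) ℝ) : ℝ :=
  max (θ / lam₁ + Real.sqrt ((N₁ : ℝ) * (N₀ : ℝ) * θ / lam₂) * Xcol1 X)
      (θ * Real.sqrt ((N₁ : ℝ) * (N₀ : ℝ) * θ) / (lam₁ * Real.sqrt lam₂)
        + Real.sqrt ((N : ℝ) * θ) + Xcol1 X)

/-- `Ω₃ = {z : ‖b₁‖_∞ ≤ α, ‖b₂‖_∞ ≤ α}`. -/
def Omega3 (lam₁ lam₂ θ : ℝ) (X : Matrix (Fin N₀) (Fin N) ℝ) : Set (Pt N N₀ N₁) :=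
  {z | (∀ i, |z.2.1 i| ≤ alphaC N N₀ N₁ lam₁ lam₂ θ X) ∧
       (∀ j, |z.2.2.1 j| ≤ alphaC N N₀ N₁ lam₁ lam₂ θ X)}

/-- `Z = Ω₂ ∩ Ω₃`. -/
def Zset (lam₁ lam₂ θ : ℝ) (X : Matrix (Fin N₀) (Fin N) ℝ) : Set (Pt N N₀ N₁) :=
  Omega2 X ∩ Omega3 lam₁ lam₂ θ X

/-- tangent cone of `C` at `zb`. -/
def TangentCone (C : Set (Pt N N₀ N₁)) (zb : Pt N N₀ N₁) : Set (Pt N N₀ N₁) :=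
  {d | ∃ zs : ℕ → Pt N N₀ N₁, ∃ ts : ℕ → ℝ,
      (∀ k, zs k ∈ C) ∧ (∀ k, 0 < ts k) ∧
      Filter.Tendsto ts Filter.atTop (nhds 0) ∧
      Filter.Tendsto (fun k => distPt (zs k) zb) Filter.atTop (nhds 0) ∧
      Filter.Tendsto (fun k => normPt ((ts k)⁻¹ • (zs k - zb) - d)) Filter.atTop (nhds 0)}

/-- `zb` is a d-stationary point of `f` over `C`:
`liminf_{t↓0} (f(zb + t d) - f(zb))/t ≥ 0` for every tangent direction `d`. -/
def DStationary (f : Pt N N₀ N₁ → ℝ) (C : Set (Pt N N₀ N₁)) (zb : Pt N N₀ N₁) : Prop :=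
  zb ∈ C ∧ ∀ d ∈ TangentCone C zb, ∀ ε : ℝ, 0 < ε → ∃ δ : ℝ, 0 < δ ∧
    ∀ t : ℝ, 0 < t → t < δ → -ε < (f (zb + t • d) - f zb) / t

/-- smoothing function `s_μ` of the ReLU. -/
def smoothRelu (μ y : ℝ) : ℝ :=
  if y < 0 then 0 else if y ≤ μ then y ^ 2 / (2 * μ) else y - μ / 2

/-- smoothed fidelity term `F̃(z, μ)`. -/
def Ftil (X : Matrix (Fin N₀) (Fin N) ℝ) (z : Pt N N₀ N₁) (μ : ℝ) : ℝ :=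
  (1 / (N : ℝ)) * (∑ n, ∑ j, (relu (outPre z j n)) ^ 2)
    + (1 / (N : ℝ)) * (∑ j, ∑ n, (X j n) ^ 2)
    - (2 / (N : ℝ)) * ∑ n, ∑ j, X j n * smoothRelu μ (outPre z j n)

/-- smoothed penalty term `P̃(z, μ)`. -/
def Ptil (β : ℝ) (X : Matrix (Fin N₀) (Fin N) ℝ) (z : Pt N N₀ N₁) (μ : ℝ) : ℝ :=
  β * ∑ n, ∑ i, (z.2.2.2 i n - smoothRelu μ (preact X z i n))

/-- smoothed objective `Õ(z, μ)`. -/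
def Otil (lam₁ lam₂ β : ℝ) (X : Matrix (Fin N₀) (Fin N) ℝ) (z : Pt N N₀ N₁) (μ : ℝ) : ℝ :=
  Ftil X z μ + Ptil β X z μ + Rv lam₁ lam₂ z

/-!
On `Ω_θ` every summand of `O` is nonnegative (`P` because `z ∈ Ω₂`), so each is at most `θ`.
This gives the entrywise bounds `0 ≤ vₙ ≤ θ / λ₁`, `|W_ij| ≤ √(θ / λ₂)` and
`|(Wᵀvₙ + b₂)₊ − xₙ| ≤ √(N θ)`. On a set with such bounds, `F` and `R` are composed of the
bilinear map `(W, v) ↦ Wᵀv`, the 1-Lipschitz ReLU and squaring, all Lipschitz with constants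
depending only on the bounds.
-/

open Finset

section Sums

variable {ι κ : Type*} [Fintype ι] [Fintype κ]

lemma le_sum_sum_of_nonneg {f : ι → κ → ℝ} (hf : ∀ i j, 0 ≤ f i j) (i : ι) (j : κ) :
    f i j ≤ ∑ i, ∑ j, f i j :=
  (single_le_sum (fun j _ => hf i j) (mem_univ j)).trans
    (single_le_sum (fun i _ => sum_nonneg fun j _ => hf i j) (mem_univ i))

lemma abs_sum_sub_sum_le {f g : ι → ℝ} {c : ℝ} (h : ∀ i, |f i - g i| ≤ c) :
    |∑ i, f i - ∑ i, g i| ≤ Fintype.card ι * c := by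
  rw [← sum_sub_distrib]
  calc |∑ i, (f i - g i)| ≤ ∑ i, |f i - g i| := abs_sum_le_sum_abs _ _
    _ ≤ ∑ _i : ι, c := sum_le_sum fun i _ => h i
    _ = Fintype.card ι * c := by simp

lemma abs_sum_sum_sub_sum_sum_le {f g : ι → κ → ℝ} {c : ℝ} (h : ∀ i j, |f i j - g i j| ≤ c) :
    |∑ i, ∑ j, f i j - ∑ i, ∑ j, g i j| ≤ Fintype.card ι * (Fintype.card κ * c) :=
  abs_sum_sub_sum_le fun i => abs_sum_sub_sum_le (h i)

end Sums

lemma abs_mul_sub_mul_le (a b a' b' : ℝ) :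
    |a * b - a' * b'| ≤ |a| * |b - b'| + |b'| * |a - a'| := by
  calc |a * b - a' * b'| = |a * (b - b') + b' * (a - a')| := by ring_nf
    _ ≤ |a| * |b - b'| + |b'| * |a - a'| := by
      rw [← abs_mul, ← abs_mul]; exact abs_add_le _ _

lemma abs_sq_sub_sq_le {a b s : ℝ} (ha : |a| ≤ s) (hb : |b| ≤ s) :
    |a ^ 2 - b ^ 2| ≤ 2 * s * |a - b| := by
  rw [sq_sub_sq, abs_mul]
  exact mul_le_mul_of_nonneg_right ((abs_add_le a b).trans (by linarith)) (abs_nonneg _)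

lemma abs_relu_sub_relu_le (x y : ℝ) : |relu x - relu y| ≤ |x - y| :=
  abs_max_sub_max_le_abs x y 0

section Coordinates

variable (z z' : Pt N N₀ N₁)

lemma sq_W_le_sqnormPt (i : Fin N₁) (j : Fin N₀) : z.1 i j ^ 2 ≤ sqnormPt z := by
  have := le_sum_sum_of_nonneg (fun i j => sq_nonneg (z.1 i j)) i j
  have : 0 ≤ ∑ i, z.2.1 i ^ 2 := by positivity
  have : 0 ≤ ∑ j, z.2.2.1 j ^ 2 := by positivity
  have : 0 ≤ ∑ i, ∑ n, z.2.2.2 i n ^ 2 := by positivity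
  unfold sqnormPt; linarith

lemma sq_b₂_le_sqnormPt (j : Fin N₀) : z.2.2.1 j ^ 2 ≤ sqnormPt z := by
  have := single_le_sum (fun j _ => sq_nonneg (z.2.2.1 j)) (mem_univ j)
  have : 0 ≤ ∑ i, ∑ j, z.1 i j ^ 2 := by positivity
  have : 0 ≤ ∑ i, z.2.1 i ^ 2 := by positivity
  have : 0 ≤ ∑ i, ∑ n, z.2.2.2 i n ^ 2 := by positivity
  unfold sqnormPt; linarith

lemma sq_V_le_sqnormPt (i : Fin N₁) (n : Fin N) : z.2.2.2 i n ^ 2 ≤ sqnormPt z := by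
  have := le_sum_sum_of_nonneg (fun i n => sq_nonneg (z.2.2.2 i n)) i n
  have : 0 ≤ ∑ i, ∑ j, z.1 i j ^ 2 := by positivity
  have : 0 ≤ ∑ i, z.2.1 i ^ 2 := by positivity
  have : 0 ≤ ∑ j, z.2.2.1 j ^ 2 := by positivity
  unfold sqnormPt; linarith

lemma abs_W_sub_le_distPt (i : Fin N₁) (j : Fin N₀) : |z.1 i j - z'.1 i j| ≤ distPt z z' :=
  Real.abs_le_sqrt (sq_W_le_sqnormPt (z - z') i j)

lemma abs_b₂_sub_le_distPt (j : Fin N₀) : |z.2.2.1 j - z'.2.2.1 j| ≤ distPt z z' :=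
  Real.abs_le_sqrt (sq_b₂_le_sqnormPt (z - z') j)

lemma abs_V_sub_le_distPt (i : Fin N₁) (n : Fin N) :
    |z.2.2.2 i n - z'.2.2.2 i n| ≤ distPt z z' :=
  Real.abs_le_sqrt (sq_V_le_sqnormPt (z - z') i n)

end Coordinates

section LevelSet

variable {lam₁ lam₂ β θ : ℝ} {X : Matrix (Fin N₀) (Fin N) ℝ} {z : Pt N N₀ N₁}

lemma V_nonneg_of_mem_Omega2 (hz : z ∈ Omega2 X) (i : Fin N₁) (n : Fin N) : 0 ≤ z.2.2.2 i n :=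
  (le_max_right _ 0).trans (hz i n)

lemma Pv_nonneg_of_mem_Omega2 (hβ : 0 ≤ β) (hz : z ∈ Omega2 X) : 0 ≤ Pv β X z :=
  mul_nonneg hβ (sum_nonneg fun n _ => sum_nonneg fun i _ => sub_nonneg.2 (hz i n))

lemma Fv_nonneg : 0 ≤ Fv X z := by
  unfold Fv; positivity

lemma summands_le_of_mem_OmegaLev (hlam₁ : 0 ≤ lam₁) (hlam₂ : 0 ≤ lam₂) (hβ : 0 ≤ β)
    (hz : z ∈ OmegaLev lam₁ lam₂ β θ X) :
    Fv X z ≤ θ ∧ lam₁ * ∑ n, ∑ i, z.2.2.2 i n ≤ θ ∧ lam₂ * ∑ i, ∑ j, z.1 i j ^ 2 ≤ θ := by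
  obtain ⟨hz₂, hO⟩ := hz
  have hF := Fv_nonneg (X := X) (z := z)
  have hP := Pv_nonneg_of_mem_Omega2 hβ hz₂
  have hV : 0 ≤ lam₁ * ∑ n, ∑ i, z.2.2.2 i n :=
    mul_nonneg hlam₁ (sum_nonneg fun n _ => sum_nonneg fun i _ => V_nonneg_of_mem_Omega2 hz₂ i n)
  have hW : 0 ≤ lam₂ * ∑ i, ∑ j, z.1 i j ^ 2 := by positivity
  unfold Ov Rv at hO
  refine ⟨?_, ?_, ?_⟩ <;> linarith

lemma abs_V_le_of_mem_OmegaLev (hlam₁ : 0 < lam₁) (hlam₂ : 0 ≤ lam₂) (hβ : 0 ≤ β)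
    (hz : z ∈ OmegaLev lam₁ lam₂ β θ X) (i : Fin N₁) (n : Fin N) : |z.2.2.2 i n| ≤ θ / lam₁ := by
  have hV := V_nonneg_of_mem_Omega2 hz.1
  rw [abs_of_nonneg (hV i n), le_div_iff₀' hlam₁]
  exact (mul_le_mul_of_nonneg_left (le_sum_sum_of_nonneg (fun n i => hV i n) n i) hlam₁.le).trans
    (summands_le_of_mem_OmegaLev hlam₁.le hlam₂ hβ hz).2.1

lemma abs_W_le_of_mem_OmegaLev (hlam₁ : 0 ≤ lam₁) (hlam₂ : 0 < lam₂) (hβ : 0 ≤ β)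
    (hz : z ∈ OmegaLev lam₁ lam₂ β θ X) (i : Fin N₁) (j : Fin N₀) : |z.1 i j| ≤ √(θ / lam₂) := by
  refine Real.abs_le_sqrt ?_
  rw [le_div_iff₀' hlam₂]
  exact (mul_le_mul_of_nonneg_left (le_sum_sum_of_nonneg (fun i j => sq_nonneg (z.1 i j)) i j)
    hlam₂.le).trans (summands_le_of_mem_OmegaLev hlam₁ hlam₂.le hβ hz).2.2

lemma abs_residual_le_of_mem_OmegaLev (hN : 0 < N) (hlam₁ : 0 ≤ lam₁) (hlam₂ : 0 ≤ lam₂)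
    (hβ : 0 ≤ β) (hz : z ∈ OmegaLev lam₁ lam₂ β θ X) (j : Fin N₀) (n : Fin N) :
    |relu (outPre z j n) - X j n| ≤ √(N * θ) := by
  have hF := (summands_le_of_mem_OmegaLev hlam₁ hlam₂ hβ hz).1
  rw [Fv, one_div_mul_eq_div, div_le_iff₀' (by exact_mod_cast hN)] at hF
  exact Real.abs_le_sqrt
    ((le_sum_sum_of_nonneg (fun n j => sq_nonneg (relu (outPre z j n) - X j n)) n j).trans hF)

end LevelSet

section Lipschitz

variable {z z' : Pt N N₀ N₁} {a b : ℝ}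

lemma abs_outPre_sub_le (hW : ∀ i j, |z.1 i j| ≤ a) (hV : ∀ i n, |z'.2.2.2 i n| ≤ b)
    (j : Fin N₀) (n : Fin N) :
    |outPre z j n - outPre z' j n| ≤ (N₁ * (a + b) + 1) * distPt z z' := by
  have hprod : ∀ i, |z.1 i j * z.2.2.2 i n - z'.1 i j * z'.2.2.2 i n| ≤ (a + b) * distPt z z' :=
    fun i => calc
      _ ≤ |z.1 i j| * |z.2.2.2 i n - z'.2.2.2 i n| + |z'.2.2.2 i n| * |z.1 i j - z'.1 i j| :=
        abs_mul_sub_mul_le _ _ _ _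
      _ ≤ a * distPt z z' + b * distPt z z' :=
        add_le_add
          (mul_le_mul (hW i j) (abs_V_sub_le_distPt z z' i n) (abs_nonneg _)
            ((abs_nonneg _).trans (hW i j)))
          (mul_le_mul (hV i n) (abs_W_sub_le_distPt z z' i j) (abs_nonneg _)
            ((abs_nonneg _).trans (hV i n)))
      _ = (a + b) * distPt z z' := by ring
  calc |outPre z j n - outPre z' j n|
      = |(∑ i, z.1 i j * z.2.2.2 i n - ∑ i, z'.1 i j * z'.2.2.2 i n)
          + (z.2.2.1 j - z'.2.2.1 j)| := by unfold outPre; ring_nf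
    _ ≤ N₁ * ((a + b) * distPt z z') + distPt z z' :=
      (abs_add_le _ _).trans (add_le_add (by simpa using abs_sum_sub_sum_le hprod)
        (abs_b₂_sub_le_distPt z z' j))
    _ = (N₁ * (a + b) + 1) * distPt z z' := by ring

lemma abs_Fv_sub_le (hN : 0 < N) {X : Matrix (Fin N₀) (Fin N) ℝ} {s : ℝ}
    (hW : ∀ i j, |z.1 i j| ≤ a) (hV : ∀ i n, |z'.2.2.2 i n| ≤ b)
    (hres : ∀ j n, |relu (outPre z j n) - X j n| ≤ s)
    (hres' : ∀ j n, |relu (outPre z' j n) - X j n| ≤ s) :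
    |Fv X z - Fv X z'| ≤ 2 * N₀ * s * (N₁ * (a + b) + 1) * distPt z z' := by
  have hterm : ∀ n j, |(relu (outPre z j n) - X j n) ^ 2 - (relu (outPre z' j n) - X j n) ^ 2|
      ≤ 2 * s * ((N₁ * (a + b) + 1) * distPt z z') := fun n j => by
    refine (abs_sq_sub_sq_le (hres j n) (hres' j n)).trans
      (mul_le_mul_of_nonneg_left ?_ (by linarith [(abs_nonneg _).trans (hres j n)]))
    rw [sub_sub_sub_cancel_right]
    exact (abs_relu_sub_relu_le _ _).trans (abs_outPre_sub_le hW hV j n)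
  have hN' : (N : ℝ) ≠ 0 := by positivity
  unfold Fv
  rw [← mul_sub, abs_mul, abs_of_nonneg (by positivity)]
  calc 1 / (N : ℝ) * |_|
      ≤ 1 / N * (N * (N₀ * (2 * s * ((N₁ * (a + b) + 1) * distPt z z')))) := by
        gcongr; simpa using abs_sum_sum_sub_sum_sum_le hterm
    _ = 2 * N₀ * s * (N₁ * (a + b) + 1) * distPt z z' := by field_simp

lemma abs_Rv_sub_le {lam₁ lam₂ : ℝ} (hlam₁ : 0 ≤ lam₁) (hlam₂ : 0 ≤ lam₂)
    (hW : ∀ i j, |z.1 i j| ≤ a) (hW' : ∀ i j, |z'.1 i j| ≤ a) :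
    |Rv lam₁ lam₂ z - Rv lam₁ lam₂ z'|
      ≤ (lam₁ * N * N₁ + 2 * lam₂ * N₁ * N₀ * a) * distPt z z' := by
  have hV := abs_sum_sum_sub_sum_sum_le fun n i => abs_V_sub_le_distPt z z' i n
  have hWsq := abs_sum_sum_sub_sum_sum_le fun i j =>
    (abs_sq_sub_sq_le (hW i j) (hW' i j)).trans (mul_le_mul_of_nonneg_left
      (abs_W_sub_le_distPt z z' i j) (by linarith [(abs_nonneg _).trans (hW i j)]))
  simp only [Fintype.card_fin] at hV hWsq
  calc |Rv lam₁ lam₂ z - Rv lam₁ lam₂ z'|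
      = |lam₁ * (∑ n, ∑ i, z.2.2.2 i n - ∑ n, ∑ i, z'.2.2.2 i n)
          + lam₂ * (∑ i, ∑ j, z.1 i j ^ 2 - ∑ i, ∑ j, z'.1 i j ^ 2)| := by unfold Rv; ring_nf
    _ ≤ lam₁ * |∑ n, ∑ i, z.2.2.2 i n - ∑ n, ∑ i, z'.2.2.2 i n|
          + lam₂ * |∑ i, ∑ j, z.1 i j ^ 2 - ∑ i, ∑ j, z'.1 i j ^ 2| :=
      (abs_add_le _ _).trans (by rw [abs_mul, abs_mul, abs_of_nonneg hlam₁, abs_of_nonneg hlam₂])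
    _ ≤ lam₁ * (N * (N₁ * distPt z z')) + lam₂ * (N₁ * (N₀ * (2 * a * distPt z z'))) := by
      gcongr
    _ = (lam₁ * N * N₁ + 2 * lam₂ * N₁ * N₀ * a) * distPt z z' := by ring

end Lipschitz

theorem stmt5_general (N N₀ N₁ : ℕ) (hN : 0 < N)
    (lam₁ lam₂ β θ : ℝ) (hlam₁ : 0 < lam₁) (hlam₂ : 0 < lam₂) (hbeta : 0 < β)
    (X : Matrix (Fin N₀) (Fin N) ℝ)
    (hθ : (1 / (N : ℝ)) * ∑ j, ∑ n, (X j n) ^ 2 < θ) :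
    ∃ LF LR : ℝ, 0 ≤ LF ∧ 0 ≤ LR ∧
      ∀ z : Pt N N₀ N₁, z ∈ OmegaLev lam₁ lam₂ β θ X →
      ∀ z' : Pt N N₀ N₁, z' ∈ OmegaLev lam₁ lam₂ β θ X →
        |Fv X z - Fv X z'| ≤ LF * distPt z z' ∧
        |Rv lam₁ lam₂ z - Rv lam₁ lam₂ z'| ≤ LR * distPt z z' := by
  have hθ₀ : 0 ≤ θ := le_trans (by positivity) hθ.le
  refine ⟨2 * N₀ * √(N * θ) * (N₁ * (√(θ / lam₂) + θ / lam₁) + 1),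
    lam₁ * N * N₁ + 2 * lam₂ * N₁ * N₀ * √(θ / lam₂), by positivity, by positivity, ?_⟩
  intro z hz z' hz'
  have hW := abs_W_le_of_mem_OmegaLev hlam₁.le hlam₂ hbeta.le hz
  have hW' := abs_W_le_of_mem_OmegaLev hlam₁.le hlam₂ hbeta.le hz'
  exact ⟨abs_Fv_sub_le hN hW (abs_V_le_of_mem_OmegaLev hlam₁ hlam₂.le hbeta.le hz')
      (abs_residual_le_of_mem_OmegaLev hN hlam₁.le hlam₂.le hbeta.le hz)
      (abs_residual_le_of_mem_OmegaLev hN hlam₁.le hlam₂.le hbeta.le hz'),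
    abs_Rv_sub_le hlam₁.le hlam₂.le hW hW'⟩

theorem stmt5 (N N₀ N₁ : ℕ) (hN : 0 < N) (hN₀ : 0 < N₀) (hN₁ : 0 < N₁)
    (lam₁ lam₂ β θ : ℝ) (hlam₁ : 0 < lam₁) (hlam₂ : 0 < lam₂) (hbeta : 0 < β)
    (X : Matrix (Fin N₀) (Fin N) ℝ)
    (hθ : (1 / (N : ℝ)) * ∑ j, ∑ n, (X j n) ^ 2 < θ) :
    ∃ LF LR : ℝ, 0 ≤ LF ∧ 0 ≤ LR ∧
      ∀ z : Pt N N₀ N₁, z ∈ OmegaLev lam₁ lam₂ β θ X →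
      ∀ z' : Pt N N₀ N₁, z' ∈ OmegaLev lam₁ lam₂ β θ X →
        |Fv X z - Fv X z'| ≤ LF * distPt z z' ∧
        |Rv lam₁ lam₂ z - Rv lam₁ lam₂ z'| ≤ LR * distPt z z' :=
  stmt5_general N N₀ N₁ hN lam₁ lam₂ β θ hlam₁ hlam₂ hbeta X hθ
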